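/- arXiv:2201.00328 — 7 statements merged into one kernel-verified Lean document; each statement's English description precedes it below -/
import Mathlib

section
/- If a family T of binary vectors of length t contains more than 1 + (k+d-1)·2^d·C(t,d) + Σ_{i=0}^{d-1} C(t,i) distinct vectors, then there exists a set I of d coordinates such that every function from I to {0,1} arises as the projection onto I of at least k+d distinct vectors of T. -/
/-!
Suppose no `d`-set `I` of coordinates works. Then for every `d`-set `I` there is a pattern `g_I`
realized by fewer than `k + d` vectors of `T`. Removing all those vectors deletes at most
`C(t,d)·(k+d-1)` vectors, and what remains realizes no `g_I` on `I`, so it shatters no `d`-set.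
By the Sauer–Shelah lemma it then has at most `Σ_{i<d} C(t,i)` elements, contradicting the
size of `T`.
-/

open Finset

namespace Finset

variable {α : Type*} [DecidableEq α]

theorem card_lt_of_shatters_of_forall_not_shatters {𝒜 : Finset (Finset α)} {s : Finset α}
    {d : ℕ} (h : ∀ I, #I = d → ¬ 𝒜.Shatters I) (hs : 𝒜.Shatters s) : #s < d := by
  by_contra! hds
  obtain ⟨I, hIs, hI⟩ := exists_subset_card_eq hds
  exact h I hI (hs.mono_right hIs)

theorem card_le_sum_choose_of_forall_not_shatters [Fintype α] (𝒜 : Finset (Finset α)) (d : ℕ)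
    (h : ∀ I, #I = d → ¬ 𝒜.Shatters I) :
    #𝒜 ≤ ∑ i ∈ range d, (Fintype.card α).choose i := by
  have hsub : 𝒜.shatterer ⊆ (range d).biUnion (powersetCard · univ) := fun s hs =>
    mem_biUnion.2 ⟨#s, mem_range.2 (card_lt_of_shatters_of_forall_not_shatters h
      (mem_shatterer.1 hs)), mem_powersetCard_univ.2 rfl⟩
  calc #𝒜 ≤ #𝒜.shatterer := card_le_card_shatterer 𝒜
    _ ≤ #((range d).biUnion (powersetCard · univ)) := card_le_card hsub
    _ ≤ ∑ i ∈ range d, #(powersetCard i (univ : Finset α)) := card_biUnion_le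
    _ = ∑ i ∈ range d, (Fintype.card α).choose i := by simp only [card_powersetCard, card_univ]

end Finset

section BooleanVectors

variable {α : Type*} [Fintype α]

def trueSet (v : α → Bool) : Finset α := univ.filter (v · = true)

theorem trueSet_injective : Function.Injective (trueSet : (α → Bool) → Finset α) := by
  intro v w hvw
  funext i
  have hi := congrArg (i ∈ ·) hvw
  simp only [trueSet, mem_filter, mem_univ, true_and, eq_iff_iff] at hi
  exact Bool.eq_iff_iff.2 hi

variable [DecidableEq α]

theorem exists_agree_of_shatters_image_trueSet {F : Finset (α → Bool)} {I : Finset α}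
    (hF : (F.image trueSet).Shatters I) (g : α → Bool) : ∃ v ∈ F, ∀ i ∈ I, v i = g i := by
  obtain ⟨_, hu, hIu⟩ := hF (filter_subset (g · = true) I)
  obtain ⟨v, hv, rfl⟩ := mem_image.1 hu
  refine ⟨v, hv, fun i hi => ?_⟩
  have hmem := congrArg (i ∈ ·) hIu
  simp only [trueSet, mem_inter, mem_filter, mem_univ, true_and, hi, eq_iff_iff] at hmem
  exact Bool.eq_iff_iff.2 hmem

theorem card_le_sum_choose_of_forall_exists_not_agree (F : Finset (α → Bool)) (d : ℕ)
    (h : ∀ I : Finset α, #I = d → ∃ g : α → Bool, ∀ v ∈ F, ¬ ∀ i ∈ I, v i = g i) :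
    #F ≤ ∑ i ∈ range d, (Fintype.card α).choose i := by
  rw [← card_image_of_injective F trueSet_injective]
  refine card_le_sum_choose_of_forall_not_shatters _ d fun I hI hF => ?_
  obtain ⟨g, hg⟩ := h I hI
  obtain ⟨v, hv, hvg⟩ := exists_agree_of_shatters_image_trueSet hF g
  exact hg v hv hvg

theorem card_le_of_forall_exists_card_filter_agree_le (T : Finset (α → Bool)) (d m : ℕ)
    (h : ∀ I : Finset α, #I = d → ∃ g : α → Bool, #(T.filter fun v => ∀ i ∈ I, v i = g i) ≤ m) :
    #T ≤ (Fintype.card α).choose d * m + ∑ i ∈ range d, (Fintype.card α).choose i := by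
  choose! g hg using h
  set R := (powersetCard d univ).biUnion fun I => T.filter fun v => ∀ i ∈ I, v i = g I i
  have hR : #R ≤ (Fintype.card α).choose d * m := by
    calc #R ≤ ∑ I ∈ powersetCard d univ, #(T.filter fun v => ∀ i ∈ I, v i = g I i) :=
          card_biUnion_le
      _ ≤ ∑ _I ∈ powersetCard d (univ : Finset α), m :=
          sum_le_sum fun I hI => hg I (mem_powersetCard_univ.1 hI)
      _ = (Fintype.card α).choose d * m := by simp
  have hrest : #(T \ R) ≤ ∑ i ∈ range d, (Fintype.card α).choose i := by
    refine card_le_sum_choose_of_forall_exists_not_agree _ d fun I hI => ⟨g I, fun v hv hvg => ?_⟩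
    refine (mem_sdiff.1 hv).2 (mem_biUnion.2 ⟨I, mem_powersetCard_univ.2 hI, ?_⟩)
    exact mem_filter.2 ⟨(mem_sdiff.1 hv).1, hvg⟩
  calc #T ≤ #R + #(T \ R) := card_le_card_sdiff_add_card.trans_eq (add_comm _ _)
    _ ≤ _ := add_le_add hR hrest

end BooleanVectors

/-- If a family `T` of binary vectors of length `t` contains more than
`1 + (k+d-1)·2^d·C(t,d) + Σ_{i<d} C(t,i)` distinct vectors, then there is a set `I`
of `d` coordinates such that every function `g` arises as the projection onto `I`
of at least `k+d` distinct vectors of `T`. -/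
theorem stmt_0 (t k d : ℕ) (T : Finset (Fin t → Bool))
    (hT : 1 + (k + d - 1) * 2 ^ d * t.choose d + ∑ i ∈ Finset.range d, t.choose i < T.card) :
    ∃ I : Finset (Fin t), I.card = d ∧
      ∀ g : Fin t → Bool, k + d ≤ (T.filter (fun v => ∀ i ∈ I, v i = g i)).card := by
  by_contra! hfew
  -- the statement elaborates its filter with a `Fin`-specific `Decidable` instance, hence `convert`
  have hle := card_le_of_forall_exists_card_filter_agree_le T d (k + d - 1) fun I hI =>
    (hfew I hI).imp fun _ hg => by convert Nat.le_sub_one_of_lt hg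
  rw [Fintype.card_fin] at hle
  have hpow : t.choose d * (k + d - 1) ≤ (k + d - 1) * 2 ^ d * t.choose d := by
    rw [mul_comm]
    exact Nat.mul_le_mul_right _ (Nat.le_mul_of_pos_right _ (Nat.two_pow_pos d))
  omega
end

section
/- (Sauer–Shelah lemma) If a family T of subsets of a set of size t has cardinality strictly greater than Σ_{i=0}^{d-1} C(t,i), then there exists a subset I of size d that is shattered by T, i.e., every subset of I equals S ∩ I for some S ∈ T. -/
/-!
Pajor's form of the Sauer–Shelah lemma bounds `#T` by the number of sets shattered by `T`, all of
which have size at most the VC-dimension of `T`; so `#T ≤ ∑_{k ≤ vcDim T} C(t, k)`, and the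
hypothesis forces `d ≤ vcDim T`. A shattered set of maximal size then has a `d`-element subset,
which is shattered as well.
-/

namespace Finset

variable {α : Type*} [DecidableEq α] {𝒜 : Finset (Finset α)}

lemma exists_shatters_card_eq_vcDim (h𝒜 : 𝒜.Nonempty) : ∃ s, 𝒜.Shatters s ∧ #s = 𝒜.vcDim := by
  have hne : 𝒜.shatterer.Nonempty := ⟨∅, mem_shatterer.2 (shatters_empty.2 h𝒜)⟩
  obtain ⟨s, hs, hcard⟩ := exists_mem_eq_sup _ hne card
  exact ⟨s, mem_shatterer.1 hs, hcard.symm⟩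

lemma exists_shatters_card_eq_of_le_vcDim {d : ℕ} (h𝒜 : 𝒜.Nonempty) (hd : d ≤ 𝒜.vcDim) :
    ∃ s, 𝒜.Shatters s ∧ #s = d := by
  obtain ⟨s, hs, hcard⟩ := exists_shatters_card_eq_vcDim h𝒜
  obtain ⟨t, hts, htcard⟩ := exists_subset_card_eq (hcard ▸ hd)
  exact ⟨t, hs.mono_right hts, htcard⟩

lemma card_le_sum_range_choose_vcDim [Fintype α] :
    #𝒜 ≤ ∑ k ∈ range (𝒜.vcDim + 1), (Fintype.card α).choose k := by
  rw [← Nat.Iio_eq_range, Finset.Iio_add_one_eq_Iic]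
  exact (card_le_card_shatterer 𝒜).trans card_shatterer_le_sum_vcDim

lemma le_vcDim_of_sum_range_choose_lt_card [Fintype α] {d : ℕ}
    (h : ∑ k ∈ range d, (Fintype.card α).choose k < #𝒜) : d ≤ 𝒜.vcDim := by
  by_contra! hlt
  have hsub : range (𝒜.vcDim + 1) ⊆ range d := range_subset_range.2 hlt
  exact (card_le_sum_range_choose_vcDim.trans (sum_le_sum_of_subset hsub)).not_gt h

end Finset

/-- Sauer–Shelah lemma: if a family `T` of subsets of a `t`-element set has cardinality
strictly greater than `Σ_{i<d} C(t,i)`, then some `d`-element set `I` is shattered by `T`. -/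
theorem stmt_1 (t d : ℕ) (T : Finset (Finset (Fin t)))
    (hT : ∑ i ∈ Finset.range d, t.choose i < T.card) :
    ∃ I : Finset (Fin t), I.card = d ∧ ∀ J ⊆ I, ∃ S ∈ T, S ∩ I = J := by
  have hT' : ∑ i ∈ Finset.range d, (Fintype.card (Fin t)).choose i < T.card := by
    rwa [Fintype.card_fin]
  have hTne : T.Nonempty := Finset.card_pos.1 (Nat.zero_lt_of_lt hT)
  obtain ⟨I, hI, hIcard⟩ := Finset.exists_shatters_card_eq_of_le_vcDim hTne
    (Finset.le_vcDim_of_sum_range_choose_lt_card hT')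
  refine ⟨I, hIcard, fun J hJ ↦ ?_⟩
  obtain ⟨S, hS, hSI⟩ := hI hJ
  exact ⟨S, hS, by rwa [Finset.inter_comm]⟩
end

section
/- A family of subsets of a finite set that shatters no set of size d has at most Σ_{i=0}^{d-1} C(t,i) members, where t is the size of the ground set. -/
/-!
By Pajor's variant of the Sauer–Shelah lemma, a family has at most as many members as sets it
shatters. Shattering is inherited by subsets, so a family shattering no `d`-set shatters only sets
of size less than `d`, and there are `∑_{i<d} C(t,i)` of those.
-/

namespace Finset

variable {α : Type*} [DecidableEq α] {𝒜 : Finset (Finset α)} {d : ℕ}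

lemma Shatters.card_lt_of_forall_card_eq_not_shatters
    (h : ∀ s : Finset α, #s = d → ¬ 𝒜.Shatters s) {s : Finset α} (hs : 𝒜.Shatters s) :
    #s < d := by
  by_contra! hds
  obtain ⟨u, hus, hu⟩ := exists_subset_card_eq hds
  exact h u hu (hs.mono_right hus)

lemma card_shatterer_le_sum_range_of_forall_card_eq_not_shatters [Fintype α]
    (h : ∀ s : Finset α, #s = d → ¬ 𝒜.Shatters s) :
    #𝒜.shatterer ≤ ∑ k ∈ range d, (Fintype.card α).choose k := by
  simp_rw [← card_univ, ← card_powersetCard]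
  refine (card_le_card fun s hs ↦ mem_biUnion.2 ⟨#s, ?_⟩).trans card_biUnion_le
  exact ⟨mem_range.2 ((mem_shatterer.1 hs).card_lt_of_forall_card_eq_not_shatters h),
    mem_powersetCard_univ.2 rfl⟩

lemma card_le_sum_range_of_forall_card_eq_not_shatters [Fintype α]
    (h : ∀ s : Finset α, #s = d → ¬ 𝒜.Shatters s) :
    #𝒜 ≤ ∑ k ∈ range d, (Fintype.card α).choose k :=
  (card_le_card_shatterer 𝒜).trans (card_shatterer_le_sum_range_of_forall_card_eq_not_shatters h)

end Finset

/-- A family of subsets of a `t`-element set that shatters no set of size `d`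
has at most `Σ_{i<d} C(t,i)` members. -/
theorem stmt_2 (t d : ℕ) (T : Finset (Finset (Fin t)))
    (h : ∀ I : Finset (Fin t), I.card = d → ¬ (∀ J ⊆ I, ∃ S ∈ T, S ∩ I = J)) :
    T.card ≤ ∑ i ∈ Finset.range d, t.choose i := by
  have hT : ∀ I : Finset (Fin t), I.card = d → ¬ T.Shatters I := fun I hI hshat ↦
    h I hI fun J hJ ↦ (hshat hJ).imp fun _ ⟨hS, hSJ⟩ ↦ ⟨hS, by rwa [Finset.inter_comm]⟩
  simpa using Finset.card_le_sum_range_of_forall_card_eq_not_shatters hT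
end

section
/- Let T be a family of binary vectors of length t, and suppose that no set of d coordinates is shattered at least m times by T (i.e., for every d-set I of coordinates, some function I → {0,1} is the projection of fewer than m vectors of T). Then |T| < 1 + (m-1)·2^d·C(t,d) + Σ_{i=0}^{d-1} C(t,i). -/
open Finset

private lemma sauer_aux {t d : ℕ} (𝒜 : Finset (Finset (Fin t)))
    (hno : ∀ I : Finset (Fin t), I.card = d → ¬ 𝒜.Shatters I) :
    𝒜.card ≤ ∑ i ∈ Finset.range d, t.choose i := by
  have hsub : 𝒜.shatterer ⊆ (Finset.range d).biUnion
      (fun i => (Finset.univ : Finset (Fin t)).powersetCard i) := by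
    intro s hs
    have hsh := Finset.mem_shatterer.1 hs
    have hlt : s.card < d := by
      by_contra hge
      push_neg at hge
      obtain ⟨I, hIs, hIcard⟩ := Finset.exists_subset_card_eq hge
      exact hno I hIcard (hsh.mono_right hIs)
    exact Finset.mem_biUnion.2 ⟨s.card, Finset.mem_range.2 hlt,
      Finset.mem_powersetCard_univ.2 rfl⟩
  calc 𝒜.card ≤ 𝒜.shatterer.card := Finset.card_le_card_shatterer _
    _ ≤ _ := Finset.card_le_card hsub
    _ ≤ ∑ i ∈ Finset.range d, ((Finset.univ : Finset (Fin t)).powersetCard i).card :=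
        Finset.card_biUnion_le
    _ = ∑ i ∈ Finset.range d, t.choose i := by
        simp [Finset.card_powersetCard]

private lemma key_aux (t d : ℕ) : ∀ (n : ℕ) (c : Finset (Fin t) → ℕ) (T : Finset (Fin t → Bool)),
    T.card ≤ n →
    (∀ I : Finset (Fin t), I.card = d →
      ∃ g : Fin t → Bool, (T.filter (fun v => ∀ i ∈ I, v i = g i)).card ≤ c I) →
    T.card ≤ 2 ^ d * ∑ I ∈ (Finset.univ : Finset (Fin t)).powersetCard d, c I
      + ∑ i ∈ Finset.range d, t.choose i := by
  intro n
  induction n with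
  | zero =>
    intro c T hT _
    simp_all
  | succ n ih =>
    intro c T hTn h
    by_cases hsmall : T.card ≤ ∑ i ∈ Finset.range d, t.choose i
    · exact hsmall.trans (Nat.le_add_left _ _)
    push_neg at hsmall
    -- translate to set-family world and apply Sauer-Shelah
    set toF : (Fin t → Bool) → Finset (Fin t) :=
      fun v => Finset.univ.filter (fun i => v i = true) with htoF
    clear_value toF
    have htoF_inj : Function.Injective toF := by
      intro v w hvw
      funext i
      have : (i ∈ toF v) = (i ∈ toF w) := by rw [hvw]
      simp only [htoF, Finset.mem_filter, Finset.mem_univ, true_and, eq_iff_iff] at this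
      cases hv : v i <;> cases hw : w i <;> simp_all
    set 𝒜 : Finset (Finset (Fin t)) := T.image toF with h𝒜
    clear_value 𝒜
    have h𝒜card : 𝒜.card = T.card := by
      rw [h𝒜]; exact Finset.card_image_of_injective _ htoF_inj
    obtain ⟨I, hIcard, hIsh⟩ : ∃ I : Finset (Fin t), I.card = d ∧ 𝒜.Shatters I := by
      by_contra hno
      push_neg at hno
      have := sauer_aux 𝒜 hno
      omega
    -- shattering gives, for each g, a vector of T matching g on I
    have hne : ∀ g : Fin t → Bool, ∃ v ∈ T, ∀ i ∈ I, v i = g i := by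
      intro g
      obtain ⟨u, hu, huI⟩ := hIsh (Finset.filter_subset (fun i => g i = true) I)
      rw [h𝒜] at hu
      obtain ⟨v, hvT, rfl⟩ := Finset.mem_image.1 hu
      refine ⟨v, hvT, fun i hiI => ?_⟩
      have : (i ∈ I ∩ toF v) = (i ∈ I.filter (fun i => g i = true)) := by rw [huI]
      simp only [Finset.mem_inter, Finset.mem_filter, htoF, Finset.mem_univ, true_and,
        eq_iff_iff] at this
      cases hv : v i <;> cases hg : g i <;> simp_all
    choose f hfT hfI using hne
    -- the canonical 2^d functions supported on I
    set ind : Finset (Fin t) → (Fin t → Bool) := fun s => fun i => decide (i ∈ s) with hind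
    clear_value ind
    set G : Finset (Fin t → Bool) := I.powerset.image ind with hG
    clear_value G
    have hGmem : ∀ g ∈ G, ∀ i, i ∉ I → g i = false := by
      intro g hg i hiI
      rw [hG] at hg
      obtain ⟨s, hs, rfl⟩ := Finset.mem_image.1 hg
      rw [Finset.mem_powerset] at hs
      simp only [hind, decide_eq_false_iff_not]
      exact fun hi => hiI (hs hi)
    have hGcard : G.card = 2 ^ d := by
      rw [hG, Finset.card_image_of_injOn, Finset.card_powerset, hIcard]
      intro s _ s' _ hss
      ext i
      have : ind s i = ind s' i := by rw [hss]
      simpa [hind] using this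
    set S : Finset (Fin t → Bool) := G.image f with hS
    clear_value S
    have hfinj : Set.InjOn f G := by
      intro g₁ hg₁ g₂ hg₂ hf
      funext i
      by_cases hiI : i ∈ I
      · rw [← hfI g₁ i hiI, ← hfI g₂ i hiI, hf]
      · rw [hGmem g₁ hg₁ i hiI, hGmem g₂ hg₂ i hiI]
    have hScard : S.card = 2 ^ d := by
      rw [hS, Finset.card_image_of_injOn hfinj, hGcard]
    have hST : S ⊆ T := by
      intro v hv
      rw [hS] at hv
      obtain ⟨g, _, rfl⟩ := Finset.mem_image.1 hv
      exact hfT g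
    set T' : Finset (Fin t → Bool) := T \ S with hT'
    clear_value T'
    have hT'card : T'.card + 2 ^ d = T.card := by
      rw [hT', Finset.card_sdiff_of_subset hST, hScard]
      have := Finset.card_le_card hST
      omega
    -- the witness for I
    obtain ⟨g₀, hg₀⟩ := h I hIcard
    have hcI : 1 ≤ c I := by
      have hmem : f g₀ ∈ T.filter (fun v => ∀ i ∈ I, v i = g₀ i) :=
        Finset.mem_filter.2 ⟨hfT g₀, hfI g₀⟩
      exact (Finset.card_pos.2 ⟨f g₀, hmem⟩).trans_le hg₀
    set c' : Finset (Fin t) → ℕ := Function.update c I (c I - 1) with hc'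
    clear_value c'
    -- normalized version of g₀
    set g₀' : Fin t → Bool := fun i => if i ∈ I then g₀ i else false with hg₀'
    clear_value g₀'
    have hg₀'G : g₀' ∈ G := by
      rw [hG]
      refine Finset.mem_image.2 ⟨I.filter (fun i => g₀ i = true),
        Finset.mem_powerset.2 (Finset.filter_subset _ _), ?_⟩
      funext i
      by_cases hiI : i ∈ I <;> cases hgi : g₀ i <;> simp [hind, hg₀', hiI, hgi]
    have hfg₀'P : ∀ i ∈ I, f g₀' i = g₀ i := by
      intro i hiI
      rw [hfI g₀' i hiI, hg₀']
      simp [hiI]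
    have hh' : ∀ J : Finset (Fin t), J.card = d →
        ∃ g : Fin t → Bool, (T'.filter (fun v => ∀ i ∈ J, v i = g i)).card ≤ c' J := by
      intro J hJ
      by_cases hJI : J = I
      · subst hJI
        refine ⟨g₀, ?_⟩
        have hsub : T'.filter (fun v => ∀ i ∈ J, v i = g₀ i) ⊆
            (T.filter (fun v => ∀ i ∈ J, v i = g₀ i)).erase (f g₀') := by
          intro v hv
          rw [Finset.mem_filter] at hv
          obtain ⟨hvT', hvP⟩ := hv
          rw [hT', Finset.mem_sdiff] at hvT'
          refine Finset.mem_erase.2 ⟨?_, Finset.mem_filter.2 ⟨hvT'.1, hvP⟩⟩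
          rintro rfl
          refine hvT'.2 ?_
          rw [hS]
          exact Finset.mem_image.2 ⟨g₀', hg₀'G, rfl⟩
        have hmem : f g₀' ∈ T.filter (fun v => ∀ i ∈ J, v i = g₀ i) :=
          Finset.mem_filter.2 ⟨hfT g₀', hfg₀'P⟩
        have := Finset.card_le_card hsub
        rw [Finset.card_erase_of_mem hmem] at this
        rw [hc', Function.update_self]
        exact this.trans (Nat.sub_le_sub_right hg₀ 1)
      · obtain ⟨g, hg⟩ := h J hJ
        refine ⟨g, ?_⟩
        rw [hc', Function.update_of_ne hJI, hT']
        exact (Finset.card_le_card (Finset.filter_subset_filter _ Finset.sdiff_subset)).trans hg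
    clear hg₀
    have hT'n : T'.card ≤ n := by
      have : 1 ≤ 2 ^ d := Nat.one_le_two_pow
      omega
    have := ih c' T' hT'n hh'
    have hIp : I ∈ (Finset.univ : Finset (Fin t)).powersetCard d :=
      Finset.mem_powersetCard_univ.2 hIcard
    have hsum : ∑ J ∈ (Finset.univ : Finset (Fin t)).powersetCard d, c' J + 1
        = ∑ J ∈ (Finset.univ : Finset (Fin t)).powersetCard d, c J := by
      rw [hc', Finset.sum_update_of_mem hIp,
        ← Finset.sum_erase_add _ c hIp, Finset.sdiff_singleton_eq_erase]
      omega
    have hexp : 2 ^ d * ∑ J ∈ (Finset.univ : Finset (Fin t)).powersetCard d, c J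
        = 2 ^ d * ∑ J ∈ (Finset.univ : Finset (Fin t)).powersetCard d, c' J + 2 ^ d := by
      rw [← hsum]; ring
    omega

/-- If no set of `d` coordinates is shattered at least `m` times by a family `T` of
binary vectors of length `t` (i.e. for each `d`-set `I` some function on `I` is the
projection of fewer than `m` vectors of `T`), then
`|T| < 1 + (m-1)·2^d·C(t,d) + Σ_{i<d} C(t,i)`. -/
theorem stmt_3 (t m d : ℕ) (T : Finset (Fin t → Bool))
    (h : ∀ I : Finset (Fin t), I.card = d →
      ∃ g : Fin t → Bool, (T.filter (fun v => ∀ i ∈ I, v i = g i)).card < m) :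
    T.card < 1 + (m - 1) * 2 ^ d * t.choose d + ∑ i ∈ Finset.range d, t.choose i := by
  have h' : ∀ I : Finset (Fin t), I.card = d →
      ∃ g : Fin t → Bool, (T.filter (fun v => ∀ i ∈ I, v i = g i)).card ≤ (fun _ => m - 1) I := by
    intro I hI
    obtain ⟨g, hg⟩ := h I hI
    exact ⟨g, Nat.le_pred_of_lt hg⟩
  have := key_aux t d T.card (fun _ => m - 1) T le_rfl h'
  have hps : ∑ _I ∈ (Finset.univ : Finset (Fin t)).powersetCard d, (m - 1)
      = t.choose d * (m - 1) := by
    rw [Finset.sum_const, Finset.card_powersetCard, Finset.card_univ, Fintype.card_fin,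
      smul_eq_mul]
  rw [hps] at this
  have : T.card ≤ (m - 1) * 2 ^ d * t.choose d + ∑ i ∈ Finset.range d, t.choose i := by
    calc T.card ≤ 2 ^ d * (t.choose d * (m - 1)) + ∑ i ∈ Finset.range d, t.choose i := this
      _ = (m - 1) * 2 ^ d * t.choose d + ∑ i ∈ Finset.range d, t.choose i := by ring
  clear h h'
  omega
end

section
/- If a graph G contains an induced copy of the bipartite graph U(d,d) (as a bipartite induced subgraph between two disjoint vertex sets X, Y with |X| = d, |Y| = d·2^d), then G contains at least 2^{d^2} distinct labelled induced subgraphs on 2d vertices. -/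
/-- `G` contains an induced bipartite copy of `U(k,d)` between two disjoint vertex sets:
there are injections `a` of `Fin d` (part `A`) and `b` of `Finset (Fin d) × Fin k`
(part `B`, with `k` vertices for each subset of `A`) into `V`, with disjoint images,
such that `a i` is adjacent to `b (C, j)` iff `i ∈ C`. Edges inside each part are
ignored. -/
def ContainsU {V : Type*} (G : SimpleGraph V) (k d : ℕ) : Prop :=
  ∃ (a : Fin d ↪ V) (b : Finset (Fin d) × Fin k ↪ V),
    (∀ i p, a i ≠ b p) ∧ ∀ (i : Fin d) (p : Finset (Fin d) × Fin k),
      (G.Adj (a i) (b p) ↔ i ∈ p.1)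

/-- If a graph `G` contains an induced bipartite copy of `U(d,d)`, then `G` has at least
`2^{d²}` distinct labelled induced subgraphs on `2d` vertices. -/
theorem stmt_5 {V : Type*} (G : SimpleGraph V) (d : ℕ) (h : ContainsU G d d) :
    2 ^ (d ^ 2) ≤
      {H : SimpleGraph (Fin (2 * d)) |
        ∃ f : Fin (2 * d) → V, Function.Injective f ∧ H = G.comap f}.ncard := by
  obtain ⟨a, b, hab, hadj⟩ := h
  have hlt : ∀ x : Fin (2 * d), ¬ (x : ℕ) < d → (x : ℕ) - d < d := by
    intro x hx; omega
  set f : (Fin d → Finset (Fin d)) → Fin (2 * d) → V := fun g x =>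
    if hx : (x : ℕ) < d then a ⟨x, hx⟩
    else b (g ⟨(x : ℕ) - d, hlt x hx⟩, ⟨(x : ℕ) - d, hlt x hx⟩) with hf
  have hfinj : ∀ g, Function.Injective (f g) := by
    intro g x y hxy
    simp only [hf] at hxy
    split_ifs at hxy with h1 h2 h2
    · have := a.injective hxy
      apply Fin.ext; simpa [Fin.ext_iff] using this
    · exact absurd hxy (hab _ _)
    · exact absurd hxy.symm (hab _ _)
    · have hb := b.injective hxy
      have h2' : ((x : ℕ) - d) = ((y : ℕ) - d) := by
        have := congrArg Prod.snd hb; simpa [Fin.ext_iff] using this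
      apply Fin.ext; omega
  set F : (Fin d → Finset (Fin d)) → SimpleGraph (Fin (2 * d)) := fun g => G.comap (f g) with hF
  have hFmem : ∀ g, F g ∈ {H : SimpleGraph (Fin (2 * d)) |
      ∃ f : Fin (2 * d) → V, Function.Injective f ∧ H = G.comap f} :=
    fun g => ⟨f g, hfinj g, rfl⟩
  have hfu : ∀ g (i : Fin d), f g ⟨(i : ℕ), by omega⟩ = a i := by
    intro g i
    simp only [hf]
    rw [dif_pos i.isLt]
  have hfv : ∀ g (j : Fin d), f g ⟨d + (j : ℕ), by omega⟩ = b (g j, j) := by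
    intro g j
    simp only [hf]
    rw [dif_neg (by omega)]
    congr 1
    have : d + (j : ℕ) - d = (j : ℕ) := by omega
    simp [Prod.ext_iff, Fin.ext_iff, this]
  have hFinj : Function.Injective F := by
    intro g g' hgg
    funext j
    ext i
    have h1 : (F g).Adj ⟨(i : ℕ), by omega⟩ ⟨d + (j : ℕ), by omega⟩ ↔ i ∈ g j := by
      simp only [hF, SimpleGraph.comap_adj, hfu, hfv]
      exact hadj i (g j, j)
    have h2 : (F g').Adj ⟨(i : ℕ), by omega⟩ ⟨d + (j : ℕ), by omega⟩ ↔ i ∈ g' j := by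
      simp only [hF, SimpleGraph.comap_adj, hfu, hfv]
      exact hadj i (g' j, j)
    rw [← h1, ← h2, hgg]
  calc 2 ^ (d ^ 2) = Nat.card (Fin d → Finset (Fin d)) := by
        simp [Nat.card_eq_fintype_card, pow_mul, sq]
    _ = (Set.range F).ncard := by
        rw [← Nat.card_coe_set_eq, Nat.card_range_of_injective hFinj]
    _ ≤ _ := Set.ncard_le_ncard (Set.range_subset_iff.2 hFmem) (Set.toFinite _)
end

section
/- Let G be a graph on n vertices that is U(d,d)-free (contains no pair of disjoint vertex sets inducing a bipartite copy of U(d,d)). Then the family of rows of the adjacency matrix of G, viewed as binary vectors of length n, has primal shatter function g(t) ≤ 10·t^d for all t > d. -/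
open Finset
open scoped Nat

lemma factorial_mul_choose_le_pow {t d i : ℕ} (hdt : d ≤ t) (hid : i ≤ d) :
    d ! * t.choose i ≤ t ^ d :=
  calc d ! * t.choose i = d.descFactorial (d - i) * t.descFactorial i := by
        rw [← Nat.factorial_mul_descFactorial (Nat.sub_le d i), Nat.sub_sub_self hid,
          Nat.descFactorial_eq_factorial_mul_choose t i]
        ring
    _ ≤ d ^ (d - i) * t ^ i := Nat.mul_le_mul (d.descFactorial_le_pow _) (t.descFactorial_le_pow _)
    _ ≤ t ^ (d - i) * t ^ i := Nat.mul_le_mul_right _ (Nat.pow_le_pow_left hdt _)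
    _ = t ^ d := by rw [← pow_add, Nat.sub_add_cancel hid]

lemma two_mul_sub_one_mul_succ_le_factorial (d : ℕ) : (2 * d - 1) * (d + 1) ≤ 10 * d ! := by
  obtain _ | _ | d := d
  · simp
  · simp [Nat.factorial]
  suffices ∀ d, (2 * d + 3) * (d + 3) ≤ 10 * (d + 2)! by
    simpa [show 2 * (d + 2) - 1 = 2 * d + 3 by omega] using this d
  intro d
  induction d with
  | zero => simp [Nat.factorial]
  | succ d ih =>
    rw [Nat.factorial_succ]
    nlinarith [Nat.mul_le_mul_left (d + 3) ih]

lemma two_mul_sub_one_mul_sum_choose_le {d t : ℕ} (hdt : d ≤ t) :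
    (2 * d - 1) * ∑ i ∈ range (d + 1), t.choose i ≤ 10 * t ^ d := by
  have hsum : d ! * ∑ i ∈ range (d + 1), t.choose i ≤ (d + 1) * t ^ d := by
    rw [mul_sum]
    simpa using sum_le_sum fun i hi =>
      factorial_mul_choose_le_pow hdt (Nat.lt_succ_iff.1 (mem_range.1 hi))
  refine Nat.le_of_mul_le_mul_left ?_ (Nat.factorial_pos d)
  calc d ! * ((2 * d - 1) * ∑ i ∈ range (d + 1), t.choose i)
      = (2 * d - 1) * (d ! * ∑ i ∈ range (d + 1), t.choose i) := by ring
    _ ≤ (2 * d - 1) * (d + 1) * t ^ d := by rw [mul_assoc]; gcongr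
    _ ≤ 10 * d ! * t ^ d := Nat.mul_le_mul_right _ (two_mul_sub_one_mul_succ_le_factorial d)
    _ = d ! * (10 * t ^ d) := by ring

lemma sum_range_choose_succ (t d : ℕ) :
    ∑ i ∈ range (d + 2), (t + 1).choose i
      = ∑ i ∈ range (d + 2), t.choose i + ∑ i ∈ range (d + 1), t.choose i := by
  rw [sum_range_succ', sum_range_succ' (fun i => t.choose i)]
  simp only [Nat.choose_succ_succ, sum_add_distrib, Nat.choose_zero_right]
  ring

namespace Finset

variable {α : Type*} [DecidableEq α]

def MultiShatters (m : ℕ) (𝒜 : Finset (Finset α)) (D : Finset α) : Prop :=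
  ∀ S ⊆ D, m ≤ #{A ∈ 𝒜 | A ∩ D = S}

variable {m : ℕ} {𝒜 : Finset (Finset α)} {D : Finset α} {a : α}

lemma multiShatters_empty : MultiShatters m 𝒜 ∅ ↔ m ≤ #𝒜 := by
  simp [MultiShatters]

lemma MultiShatters.of_image_erase (ha : a ∉ D) (h : MultiShatters m (𝒜.image (erase · a)) D) :
    MultiShatters m 𝒜 D := by
  intro S hS
  refine (h S hS).trans ?_
  rw [filter_image]
  refine card_image_le.trans_eq (congrArg card (filter_congr fun A _ => ?_))
  rw [erase_inter, erase_eq_of_notMem fun haA => ha (mem_inter.1 haA).2]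

lemma MultiShatters.insert_of_memberSubfamily_inter
    (h : MultiShatters m (𝒜.memberSubfamily a ∩ 𝒜.nonMemberSubfamily a) D) :
    MultiShatters m 𝒜 (insert a D) := by
  intro S hS
  refine (h _ (subset_insert_iff.1 hS)).trans ?_
  by_cases haS : a ∈ S
  · refine card_le_card_of_injOn (insert a) (fun B hB => ?_) ?_
    · simp only [coe_filter, mem_inter, mem_memberSubfamily, mem_nonMemberSubfamily,
        Set.mem_ofPred_eq] at hB ⊢
      rw [← insert_inter_distrib, hB.2, insert_erase haS]
      exact ⟨hB.1.1.1, rfl⟩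
    · intro B hB B' hB' hBB'
      simp only [coe_filter, mem_inter, mem_nonMemberSubfamily, Set.mem_ofPred_eq] at hB hB'
      rw [← erase_insert hB.1.2.2, hBB', erase_insert hB'.1.2.2]
  · refine card_le_card fun B hB => ?_
    simp only [mem_filter, mem_inter, mem_nonMemberSubfamily] at hB ⊢
    rw [inter_insert_of_notMem hB.1.2.2, hB.2, erase_eq_of_notMem haS]
    exact ⟨hB.1.2.1, rfl⟩

theorem card_le_of_forall_not_multiShatters (hm : 2 ≤ m) {I : Finset α}
    (h𝒜 : ∀ A ∈ 𝒜, A ⊆ I) {d : ℕ} (h : ∀ D ⊆ I, #D = d → ¬ MultiShatters m 𝒜 D) :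
    #𝒜 ≤ (m - 1) * ∑ i ∈ range (d + 1), (#I).choose i := by
  induction I using Finset.induction_on generalizing 𝒜 d with
  | empty =>
    have : #𝒜 ≤ 1 := card_le_one.2 fun A hA B hB => by
      rw [subset_empty.1 (h𝒜 A hA), subset_empty.1 (h𝒜 B hB)]
    simp only [card_empty, sum_range_succ', Nat.choose_zero_succ, sum_const_zero,
      Nat.choose_zero_right, zero_add, mul_one]
    omega
  | insert a I ha ih =>
    cases d with
    | zero =>
      have := h ∅ (empty_subset _) rfl
      rw [multiShatters_empty] at this
      rw [zero_add, sum_range_one, Nat.choose_zero_right, mul_one]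
      omega
    | succ d =>
      have h₁ := ih (𝒜 := 𝒜.image (erase · a)) (d := d + 1)
        (fun A hA => by
          obtain ⟨B, hB, rfl⟩ := mem_image.1 hA
          exact (erase_subset_erase a (h𝒜 B hB)).trans (erase_insert_subset a I))
        (fun D hDI hD hsh => h D (hDI.trans (subset_insert a I)) hD
          (hsh.of_image_erase fun haD => ha (hDI haD)))
      have h₂ := ih (𝒜 := 𝒜.memberSubfamily a ∩ 𝒜.nonMemberSubfamily a) (d := d)
        (fun A hA => by
          obtain ⟨hA𝒜, haA⟩ := mem_memberSubfamily.1 (mem_inter.1 hA).1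
          exact (insert_subset_insert_iff haA).1 (h𝒜 _ hA𝒜))
        (fun D hDI hD hsh => h (insert a D) (insert_subset_insert a hDI)
          (by rw [card_insert_of_notMem fun haD => ha (hDI haD), hD])
          hsh.insert_of_memberSubfamily_inter)
      have hcard : #𝒜 = #(𝒜.image (erase · a))
          + #(𝒜.memberSubfamily a ∩ 𝒜.nonMemberSubfamily a) := by
        rw [← memberSubfamily_union_nonMemberSubfamily, card_union_add_card_inter,
          card_memberSubfamily_add_card_nonMemberSubfamily]
      rw [hcard, card_insert_of_notMem ha, sum_range_choose_succ, mul_add]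
      exact Nat.add_le_add h₁ h₂

end Finset

section

variable {V : Type*} (G : SimpleGraph V)

lemma containsU_zero : ContainsU G 0 0 :=
  ⟨Function.Embedding.ofIsEmpty, Function.Embedding.ofIsEmpty, fun i => i.elim0, fun i => i.elim0⟩

variable [Fintype V] [DecidableEq V] [DecidableRel G.Adj]

theorem containsU_of_le_card_pattern {d : ℕ} (a : Fin d ↪ V)
    (h : ∀ S : Finset (Fin d), 2 * d ≤ #{u | ∀ i, G.Adj u (a i) ↔ i ∈ S}) :
    ContainsU G d d := by
  let W (S : Finset (Fin d)) : Finset V :=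
    ({u | ∀ i, G.Adj u (a i) ↔ i ∈ S} : Finset V) \ univ.map a
  have hW_card (S) : d ≤ #(W S) := by
    have := le_card_sdiff (univ.map a) {u | ∀ i, G.Adj u (a i) ↔ i ∈ S}
    rw [card_map, Finset.card_univ, Fintype.card_fin] at this
    have := h S
    dsimp only [W]
    omega
  have hW_adj {S u} (hu : u ∈ W S) (i) : G.Adj (a i) u ↔ i ∈ S := by
    rw [G.adj_comm]
    exact (mem_filter.1 (mem_sdiff.1 hu).1).2 i
  have hW_disj {S S' u} (hu : u ∈ W S) (hu' : u ∈ W S') : S = S' := by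
    ext i
    rw [← hW_adj hu, hW_adj hu']
  have e (S) : Nonempty (Fin d ↪ W S) :=
    Function.Embedding.nonempty_of_card_le (by simpa using hW_card S)
  let b : Finset (Fin d) × Fin d ↪ V :=
    ⟨fun p => (e p.1).some p.2, by
      rintro ⟨S, j⟩ ⟨S', j'⟩ hb
      change ((e S).some j : V) = (e S').some j' at hb
      obtain rfl := hW_disj ((e S).some j).2 (hb ▸ ((e S').some j').2)
      simpa using (e S).some.injective (Subtype.ext hb)⟩
  refine ⟨a, b, fun i p hab => ?_, fun i p => hW_adj ((e p.1).some p.2).2 i⟩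
  have hb : b p ∉ univ.map a := (mem_sdiff.1 ((e p.1).some p.2).2).2
  exact hb (hab ▸ mem_map_of_mem a (mem_univ i))

theorem containsU_of_multiShatters {I D : Finset V} {d : ℕ} (hDI : D ⊆ I) (hD : #D = d)
    (h : MultiShatters (2 * d) (univ.image fun u => {v ∈ I | G.Adj u v}) D) :
    ContainsU G d d := by
  let a : Fin d ↪ V :=
    (D.equivFinOfCardEq hD).symm.toEmbedding.trans (Function.Embedding.subtype _)
  have haD (i) : a i ∈ D := ((D.equivFinOfCardEq hD).symm i).2
  refine containsU_of_le_card_pattern G a fun S => ?_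
  refine (h (S.map a) fun _ hv => ?_).trans ?_
  · obtain ⟨i, -, rfl⟩ := mem_map.1 hv
    exact haD i
  rw [filter_image]
  refine card_image_le.trans (card_le_card fun u hu => ?_)
  simp only [mem_filter, mem_univ, true_and] at hu ⊢
  intro i
  simpa [haD i, hDI (haD i)] using congrArg (a i ∈ ·) hu

end

lemma card_image_decide_mem_le {α β : Type*} [DecidableEq α] (s : Finset β) (I : Finset α)
    (p : β → α → Prop) [∀ u, DecidablePred (p u)] :
    #(s.image fun u (i : I) => decide (p u i)) ≤ #(s.image fun u => {v ∈ I | p u v}) := by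
  calc #(s.image fun u (i : I) => decide (p u i))
      = #((s.image fun u => {v ∈ I | p u v}).image fun A (i : I) => decide (i.1 ∈ A)) := by
        rw [image_image]
        congr! with u i
        simp [i.2]
    _ ≤ _ := card_image_le

/-- If `G` is a `U(d,d)`-free graph on `n` vertices, then the family of rows of its
adjacency matrix (neighborhood indicator vectors) has primal shatter function
`g(t) ≤ 10·t^d` for all `t > d`: every set `I` of `t > d` coordinates admits at most
`10·t^d` distinct restrictions of rows to `I`. -/
theorem stmt_7 (n d : ℕ) (G : SimpleGraph (Fin n)) [DecidableRel G.Adj]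
    (hfree : ¬ ContainsU G d d) :
    ∀ t : ℕ, d < t → ∀ I : Finset (Fin n), I.card = t →
      (Finset.image (fun u : Fin n => fun i : {x // x ∈ I} => decide (G.Adj u i.1))
        Finset.univ).card ≤ 10 * t ^ d := by
  intro t ht I hI
  have hd : 0 < d := Nat.pos_of_ne_zero fun h => hfree (h ▸ containsU_zero G)
  calc #(univ.image fun u (i : I) => decide (G.Adj u i.1))
      ≤ #(univ.image fun u => {v ∈ I | G.Adj u v}) := card_image_decide_mem_le _ _ _
    _ ≤ (2 * d - 1) * ∑ i ∈ range (d + 1), t.choose i := by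
        rw [← hI]
        refine card_le_of_forall_not_multiShatters (by omega) (fun A hA => ?_)
          fun D hDI hD h => hfree (containsU_of_multiShatters G hDI hD h)
        obtain ⟨u, -, rfl⟩ := mem_image.1 hA
        exact filter_subset _ _
    _ ≤ 10 * t ^ d := two_mul_sub_one_mul_sum_choose_le ht.le
end

section
/- Let F be a hereditary family of graphs and suppose |F_{2d}| < 2^{d²} for some d. Then no graph in F contains an induced bipartite copy of U(d,d) between two disjoint vertex sets. -/
/-- A family of (labelled) graphs, closed under taking induced subgraphs. -/
def Hereditary (F : ∀ n : ℕ, Set (SimpleGraph (Fin n))) : Prop :=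
  ∀ (n m : ℕ) (f : Fin m ↪ Fin n), ∀ G ∈ F n, G.comap ⇑f ∈ F m

/-- If `F` is hereditary and `|F_{2d}| < 2^{d²}`, then no graph in `F` contains an
induced bipartite copy of `U(d,d)` between two disjoint vertex sets. -/
theorem stmt_18 (F : ∀ n : ℕ, Set (SimpleGraph (Fin n))) (hF : Hereditary F)
    (d : ℕ) (hcard : Nat.card (F (2 * d)) < 2 ^ (d ^ 2)) :
    ∀ (n : ℕ), ∀ G ∈ F n, ¬ ContainsU G d d := by
  intro n G hG hU
  obtain ⟨a, b, hab, hadj⟩ := hU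
  set e : Fin (2 * d) ≃ Fin d ⊕ Fin d := (finCongr (two_mul d)).trans finSumFinEquiv.symm with he
  have key : ∀ P : Fin d → Finset (Fin d),
      Function.Injective (fun x : Fin (2 * d) =>
        Sum.elim (fun i => a i) (fun j => b (P j, j)) (e x)) := by
    intro P x y hxy
    apply e.injective
    simp only at hxy
    rcases hx : e x with i | i <;> rcases hy : e y with j | j <;>
      rw [hx, hy] at hxy <;> simp only [Sum.elim_inl, Sum.elim_inr] at hxy
    · exact congrArg Sum.inl (a.injective hxy)
    · exact absurd hxy (hab i (P j, j))
    · exact absurd hxy.symm (hab j (P i, i))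
    · exact congrArg Sum.inr (congrArg Prod.snd (b.injective hxy))
  let Φ : (Fin d → Finset (Fin d)) → F (2 * d) := fun P =>
    ⟨G.comap (fun x => Sum.elim (fun i => a i) (fun j => b (P j, j)) (e x)),
     hF n (2 * d) ⟨_, key P⟩ G hG⟩
  have hΦ : Function.Injective Φ := by
    intro P P' hPP
    funext j
    ext i
    have h2 : (Φ P).val.Adj (e.symm (Sum.inl i)) (e.symm (Sum.inr j)) ↔
        (Φ P').val.Adj (e.symm (Sum.inl i)) (e.symm (Sum.inr j)) := by rw [hPP]
    simp only [Φ, SimpleGraph.comap_adj, Equiv.apply_symm_apply, Sum.elim_inl,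
      Sum.elim_inr] at h2
    rw [hadj i (P j, j), hadj i (P' j, j)] at h2
    simp [h2]
  have hle : Nat.card (Fin d → Finset (Fin d)) ≤ Nat.card (F (2 * d)) :=
    Nat.card_le_card_of_injective Φ hΦ
  have hcardeq : Nat.card (Fin d → Finset (Fin d)) = 2 ^ (d ^ 2) := by
    rw [Nat.card_eq_fintype_card]
    simp [Fintype.card_fun, sq, pow_mul]
  omega
end
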